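/- arXiv:2504.10633 — 3 statements merged into one kernel-verified Lean document; each statement's English description precedes it below -/
import Mathlib

section
/- Let M_N := Σ_{n=1}^{N} ( f(n, a_n, X_{n−1}) − φ_f(n, X_{n−1}) ). In addition let (y_n)_{n≥1} be integrable real random variables with a common mean μ := E[y_n] ≠ 0 such that, for every n ≥ 1, y_n is 𝓕_n-measurable and independent of the σ-algebra generated by 𝓕_{n−1} together with a_n, and set O_N := Σ_{n=1}^{N} ( 1 − y_n/μ ). Then the product process N ↦ M_N · O_N is a martingale with respect to (𝓕_N); equivalently, the compensated sum M and the compensated counting martingale O are orthogonal. (This is the vanishing cross-covariation computation in the proof of the martingale convergence lemma used for the CLT for renewal-driven systems, in discrete-jump-time form.) -/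
/-!
Write `ξₙ = f(n, aₙ, X_{n-1}) - φ(n, X_{n-1})` and `ηₙ = 1 - yₙ / c`, so that
`M_{n+1} O_{n+1} - Mₙ Oₙ = M_{n+1} η_{n+1} + ξ_{n+1} Oₙ`. Both terms integrate to zero over every
`s ∈ 𝓕ₙ`. For the first, `η_{n+1}` is centred and independent of `𝓕ₙ ⊔ σ(a_{n+1})`, with respect
to which `M_{n+1}` is measurable. For the second, `a_{n+1}` is independent of the `𝓕ₙ`-measurable
pair `(Xₙ, 1ₛ Oₙ)`, so one may integrate out `a_{n+1}` first with the pair frozen, and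
`∫ (f(n+1, e, x) - φ(n+1, x)) d(law a_{n+1})(e) = 0` because `a_{n+1}` has the law of `a₁`.
-/

open MeasureTheory ProbabilityTheory Finset

section SumIcc

theorem sum_Icc_succ_sub_sum_Icc (g : ℕ → ℝ) (n : ℕ) :
    ∑ k ∈ Icc 1 (n + 1), g k - ∑ k ∈ Icc 1 n, g k = g (n + 1) := by
  rw [sum_Icc_succ_top (Nat.le_add_left 1 n), add_sub_cancel_left]

theorem abs_sum_Icc_le {g : ℕ → ℝ} {B : ℝ} (hg : ∀ k, |g k| ≤ B) (n : ℕ) :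
    |∑ k ∈ Icc 1 n, g k| ≤ n * B := by
  calc |∑ k ∈ Icc 1 n, g k| ≤ ∑ k ∈ Icc 1 n, |g k| := abs_sum_le_sum_abs _ _
    _ ≤ (Icc 1 n).card • B := sum_le_card_nsmul _ _ _ fun k _ => hg k
    _ = n * B := by simp

variable {Ω : Type*} {mΩ : MeasurableSpace Ω}

theorem stronglyAdapted_sum_Icc (𝓕 : Filtration ℕ mΩ) {g : ℕ → Ω → ℝ}
    (hg : ∀ n, 1 ≤ n → Measurable[𝓕 n] (g n)) :
    StronglyAdapted 𝓕 fun N ω => ∑ n ∈ Icc 1 N, g n ω := fun _ =>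
  (Finset.measurable_sum _ fun n hn =>
    (hg n (mem_Icc.mp hn).1).mono (𝓕.mono (mem_Icc.mp hn).2) le_rfl).stronglyMeasurable

end SumIcc

section Independence

variable {Ω : Type*} {m mΩ : MeasurableSpace Ω} {μ : Measure Ω}

theorem setIntegral_mul_eq_zero_of_indep (hm : m ≤ mΩ) {s : Set Ω} (hs : MeasurableSet[m] s)
    {g Z : Ω → ℝ} (hg : Measurable[m] g) (hZ : AEStronglyMeasurable Z μ)
    (hind : Indep m (MeasurableSpace.comap Z inferInstance) μ) (hZ0 : ∫ ω, Z ω ∂μ = 0) :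
    ∫ ω in s, g ω * Z ω ∂μ = 0 := by
  have hgs : Measurable[m] (s.indicator g) := hg.indicator hs
  have hindep : IndepFun (s.indicator g) Z μ := by
    rw [IndepFun_iff_Indep]
    exact indep_of_indep_of_le_left hind hgs.comap_le
  rw [← integral_indicator (hm s hs)]
  simp_rw [Set.indicator_mul_left]
  rw [hindep.integral_fun_mul_eq_mul_integral (hgs.mono hm le_rfl).aestronglyMeasurable hZ,
    hZ0, mul_zero]

variable {E T : Type*} [MeasurableSpace E] [MeasurableSpace T] [IsFiniteMeasure μ]

theorem ProbabilityTheory.IndepFun.integral_comp_prodMk {a : Ω → E} {W : Ω → T}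
    (hind : IndepFun a W μ) (ha : AEMeasurable a μ) (hW : AEMeasurable W μ) {h : E × T → ℝ}
    (hh : StronglyMeasurable h) (hint : Integrable (fun ω => h (a ω, W ω)) μ) :
    ∫ ω, h (a ω, W ω) ∂μ = ∫ ω, ∫ e, h (e, W ω) ∂(μ.map a) ∂μ := by
  have hmap := (indepFun_iff_map_prod_eq_prod_map_map ha hW).mp hind
  have hint' : Integrable h ((μ.map a).prod (μ.map W)) := by
    rw [← hmap]
    exact (integrable_map_measure hh.aestronglyMeasurable (ha.prodMk hW)).mpr hint
  calc ∫ ω, h (a ω, W ω) ∂μ = ∫ p, h p ∂(μ.map fun ω => (a ω, W ω)) :=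
        (integral_map (ha.prodMk hW) hh.aestronglyMeasurable).symm
    _ = ∫ t, ∫ e, h (e, t) ∂(μ.map a) ∂(μ.map W) := by rw [hmap]; exact integral_prod_symm h hint'
    _ = ∫ ω, ∫ e, h (e, W ω) ∂(μ.map a) ∂μ :=
        integral_map hW hh.integral_prod_left'.aestronglyMeasurable

theorem setIntegral_comp_mul_eq_zero_of_indep (hm : m ≤ mΩ) {s : Set Ω} (hs : MeasurableSet[m] s)
    {a : Ω → E} {X : Ω → T} {g : Ω → ℝ} (ha : Measurable a) (hX : Measurable[m] X)
    (hg : Measurable[m] g) (hgi : Integrable g μ)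
    (hind : Indep (MeasurableSpace.comap a inferInstance) m μ)
    {F : E → T → ℝ} (hF : Measurable (Function.uncurry F)) {C : ℝ} (hFC : ∀ e x, |F e x| ≤ C)
    (hF0 : ∀ x, ∫ e, F e x ∂(μ.map a) = 0) :
    ∫ ω in s, F (a ω) (X ω) * g ω ∂μ = 0 := by
  have hW : Measurable[m] fun ω => (X ω, s.indicator g ω) := hX.prodMk (hg.indicator hs)
  have hindep : IndepFun a (fun ω => (X ω, s.indicator g ω)) μ := by
    rw [IndepFun_iff_Indep]
    exact indep_of_indep_of_le_right hind hW.comap_le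
  have hint : Integrable (fun ω => F (a ω) (X ω) * s.indicator g ω) μ :=
    (hgi.indicator (hm s hs)).bdd_mul
      (hF.comp (ha.prodMk (hX.mono hm le_rfl))).aestronglyMeasurable (ae_of_all _ fun ω => hFC _ _)
  rw [← integral_indicator (hm s hs)]
  simp_rw [Set.indicator_mul_right]
  rw [hindep.integral_comp_prodMk (h := fun p => F p.1 p.2.1 * p.2.2) ha.aemeasurable
    (hW.mono hm le_rfl).aemeasurable
    ((hF.comp (measurable_fst.prodMk (measurable_fst.comp measurable_snd))).mul
      (measurable_snd.comp measurable_snd)).stronglyMeasurable hint]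
  simp [integral_mul_const, hF0]

end Independence

section Centered

variable {Ω E T : Type*} {mΩ : MeasurableSpace Ω} {μ : Measure Ω} {F : E → T → ℝ} {a : Ω → E}

theorem measurable_uncurry_sub_integral_comp [MeasurableSpace E] [MeasurableSpace T] [SFinite μ]
    (hF : Measurable (Function.uncurry F)) (ha : Measurable a) :
    Measurable (Function.uncurry fun e x => F e x - ∫ ω, F (a ω) x ∂μ) :=
  hF.sub ((hF.comp ((ha.comp measurable_snd).prodMk
    measurable_fst)).stronglyMeasurable.integral_prod_right'.measurable.comp measurable_snd)

variable [IsProbabilityMeasure μ]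

theorem abs_sub_integral_comp_le {C : ℝ} (hFC : ∀ e x, |F e x| ≤ C) (e : E) (x : T) :
    |F e x - ∫ ω, F (a ω) x ∂μ| ≤ 2 * C := by
  have h : |∫ ω, F (a ω) x ∂μ| ≤ C := by
    simpa using norm_integral_le_of_norm_le_const (μ := μ) (f := fun ω => F (a ω) x)
      (ae_of_all _ fun ω => hFC (a ω) x)
  linarith [abs_sub (F e x) (∫ ω, F (a ω) x ∂μ), hFC e x]

theorem ProbabilityTheory.IdentDistrib.integral_map_sub_integral_comp_eq_zero [MeasurableSpace E]
    {a' : Ω → E} (h : IdentDistrib a' a μ μ) {g : E → ℝ} (hg : Integrable g (μ.map a)) :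
    ∫ e, (g e - ∫ ω, g (a ω) ∂μ) ∂(μ.map a') = 0 := by
  have := Measure.isProbabilityMeasure_map (μ := μ) h.aemeasurable_snd
  rw [h.map_eq, integral_sub hg (integrable_const _), integral_map h.aemeasurable_snd hg.1]
  simp

theorem integral_one_sub_div_eq_zero {y : Ω → ℝ} (hy : Integrable y μ) {c : ℝ} (hc : c ≠ 0)
    (hyc : ∫ ω, y ω ∂μ = c) : ∫ ω, (1 - y ω / c) ∂μ = 0 := by
  rw [integral_sub (integrable_const 1) (hy.div_const c), integral_div, hyc, div_self hc]
  simp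

end Centered

section Martingale

variable {Ω : Type*} {mΩ : MeasurableSpace Ω} {μ : Measure Ω} [IsFiniteMeasure μ]
  {𝓕 : Filtration ℕ mΩ}

theorem martingale_mul_of_setIntegral_cross_eq_zero {M O : ℕ → Ω → ℝ}
    (hM : StronglyAdapted 𝓕 M) (hO : StronglyAdapted 𝓕 O)
    (hMO : ∀ n, Integrable (fun ω => M n ω * O n ω) μ)
    (hMΔO : ∀ n, Integrable (fun ω => M (n + 1) ω * (O (n + 1) ω - O n ω)) μ)
    (hΔMO : ∀ n, Integrable (fun ω => (M (n + 1) ω - M n ω) * O n ω) μ)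
    (hMΔO_zero : ∀ n s, MeasurableSet[𝓕 n] s →
      ∫ ω in s, M (n + 1) ω * (O (n + 1) ω - O n ω) ∂μ = 0)
    (hΔMO_zero : ∀ n s, MeasurableSet[𝓕 n] s →
      ∫ ω in s, (M (n + 1) ω - M n ω) * O n ω ∂μ = 0) :
    Martingale (fun n ω => M n ω * O n ω) 𝓕 μ := by
  refine martingale_of_setIntegral_eq_succ (hM.mul hO) hMO fun n s hs => ?_
  have hsplit : (fun ω => M (n + 1) ω * O (n + 1) ω) = fun ω => M n ω * O n ω +
      (M (n + 1) ω * (O (n + 1) ω - O n ω) + (M (n + 1) ω - M n ω) * O n ω) := by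
    ext ω; ring
  rw [hsplit, integral_add (hMO n).integrableOn, integral_add (hMΔO n).integrableOn
    (hΔMO n).integrableOn, hMΔO_zero n s hs, hΔMO_zero n s hs, add_zero, add_zero]
  exact ((hMΔO n).add (hΔMO n)).integrableOn

theorem martingale_sum_Icc_mul_sum_Icc {G : ℕ → MeasurableSpace Ω} (h𝓕G : ∀ n, 𝓕 n ≤ G n)
    (hG : ∀ n, G n ≤ mΩ)
    {ξ η : ℕ → Ω → ℝ} {B : ℝ} (hξ : ∀ n, 1 ≤ n → Measurable[𝓕 n] (ξ n))
    (hξG : ∀ n, Measurable[G n] (ξ (n + 1))) (hξB : ∀ n ω, |ξ n ω| ≤ B)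
    (hη : ∀ n, 1 ≤ n → Measurable[𝓕 n] (η n)) (hηi : ∀ n, 1 ≤ n → Integrable (η n) μ)
    (hηG : ∀ n, Indep (G n) (MeasurableSpace.comap (η (n + 1)) inferInstance) μ)
    (hη0 : ∀ n, ∫ ω, η (n + 1) ω ∂μ = 0)
    (hξ0 : ∀ n s, MeasurableSet[𝓕 n] s →
      ∫ ω in s, ξ (n + 1) ω * ∑ k ∈ Icc 1 n, η k ω ∂μ = 0) :
    Martingale (fun N ω => (∑ n ∈ Icc 1 N, ξ n ω) * ∑ n ∈ Icc 1 N, η n ω) 𝓕 μ := by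
  have hM : StronglyAdapted 𝓕 fun N ω => ∑ n ∈ Icc 1 N, ξ n ω := stronglyAdapted_sum_Icc 𝓕 hξ
  have hOi N : Integrable (fun ω => ∑ n ∈ Icc 1 N, η n ω) μ :=
    integrable_finsetSum _ fun n hn => hηi n (mem_Icc.mp hn).1
  have hM_mul N {g : Ω → ℝ} (hg : Integrable g μ) :
      Integrable (fun ω => (∑ n ∈ Icc 1 N, ξ n ω) * g ω) μ :=
    hg.bdd_mul ((hM N).mono (𝓕.le N)).aestronglyMeasurable
      (ae_of_all _ fun ω => abs_sum_Icc_le (fun k => hξB k ω) N)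
  refine martingale_mul_of_setIntegral_cross_eq_zero hM (stronglyAdapted_sum_Icc 𝓕 hη)
    (fun N => hM_mul N (hOi N)) (fun n => ?_) (fun n => ?_) (fun n s hs => ?_) (fun n s hs => ?_)
    <;> simp only [sum_Icc_succ_sub_sum_Icc]
  · exact hM_mul _ (hηi _ n.succ_pos)
  · exact (hOi n).bdd_mul ((hξ _ n.succ_pos).mono (𝓕.le _) le_rfl).aestronglyMeasurable
      (ae_of_all _ (hξB _))
  · have hM_G : Measurable[G n] fun ω => ∑ k ∈ Icc 1 (n + 1), ξ k ω := by
      simp only [sum_Icc_succ_top (Nat.le_add_left 1 n)]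
      exact ((hM n).measurable.mono (h𝓕G n) le_rfl).add (hξG n)
    exact setIntegral_mul_eq_zero_of_indep (hG n) (h𝓕G n s hs) hM_G (hηi _ n.succ_pos).1
      (hηG n) (hη0 n)
  · exact hξ0 n s hs

end Martingale

/-- Orthogonality of the compensated sum `M` and the compensated counting
martingale `O`: if `yₙ` is `𝓕ₙ`-measurable with common mean `c ≠ 0` and independent of the
σ-algebra generated by `𝓕_{n−1}` together with `aₙ`, and `O_N = ∑_{n=1}^N (1 − yₙ/c)`,
then `N ↦ M_N · O_N` is a martingale (vanishing cross-covariation, discrete-jump-time form). -/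
theorem compensated_sum_mul_counting_martingale_is_martingale
    {Ω : Type*} {mΩ : MeasurableSpace Ω} {μ : Measure Ω} [IsProbabilityMeasure μ]
    (𝓕 : Filtration ℕ mΩ)
    {E S : Type*} [MeasurableSpace E] [MeasurableSpace S]
    (a : ℕ → Ω → E) (X : ℕ → Ω → S)
    (ha_meas : ∀ n, 1 ≤ n → Measurable[𝓕 n] (a n))
    (ha_indep : ∀ n, 1 ≤ n →
      Indep (MeasurableSpace.comap (a n) inferInstance) (𝓕 (n - 1)) μ)
    (ha_ident : ∀ n, 1 ≤ n → IdentDistrib (a n) (a 1) μ μ)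
    (hX : ∀ n, Measurable[𝓕 n] (X n))
    (f : ℕ → E → S → ℝ)
    (hf_meas : ∀ n, Measurable fun p : E × S => f n p.1 p.2)
    (hf_bdd : ∃ C, ∀ n e s, |f n e s| ≤ C)
    (φ : ℕ → S → ℝ)
    (hφ : ∀ n x, φ n x = ∫ ω, f n (a 1 ω) x ∂μ)
    (M : ℕ → Ω → ℝ)
    (hM : ∀ N ω, M N ω =
      ∑ n ∈ Finset.Icc 1 N, (f n (a n ω) (X (n - 1) ω) - φ n (X (n - 1) ω)))
    (y : ℕ → Ω → ℝ)
    (hy_meas : ∀ n, 1 ≤ n → Measurable[𝓕 n] (y n))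
    (hy_int : ∀ n, 1 ≤ n → Integrable (y n) μ)
    (c : ℝ) (hc : c ≠ 0)
    (hy_mean : ∀ n, 1 ≤ n → ∫ ω, y n ω ∂μ = c)
    (hy_indep : ∀ n, 1 ≤ n →
      Indep (MeasurableSpace.comap (y n) inferInstance)
        ((𝓕 (n - 1)) ⊔ MeasurableSpace.comap (a n) inferInstance) μ)
    (O : ℕ → Ω → ℝ)
    (hO : ∀ N ω, O N ω = ∑ n ∈ Finset.Icc 1 N, (1 - y n ω / c)) :
    Martingale (fun N ω => M N ω * O N ω) 𝓕 μ := by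
  obtain ⟨C, hC⟩ := hf_bdd
  have ha n (hn : 1 ≤ n) : Measurable (a n) := (ha_meas n hn).mono (𝓕.le n) le_rfl
  obtain rfl : φ = fun n x => ∫ ω, f n (a 1 ω) x ∂μ := funext fun n => funext (hφ n)
  obtain rfl : M = _ := funext fun N => funext (hM N)
  obtain rfl : O = _ := funext fun N => funext (hO N)
  have hF_meas n := measurable_uncurry_sub_integral_comp (μ := μ) (hf_meas n) (ha 1 le_rfl)
  have hF_bdd n := abs_sub_integral_comp_le (μ := μ) (a := a 1) (hC n)
  have hF_centred n (hn : 1 ≤ n) x :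
      ∫ e, (f n e x - ∫ ω, f n (a 1 ω) x ∂μ) ∂(μ.map (a n)) = 0 :=
    (ha_ident n hn).integral_map_sub_integral_comp_eq_zero <| .of_bound
      ((hf_meas n).comp (measurable_id.prodMk measurable_const)).aestronglyMeasurable C
      (ae_of_all _ fun e => hC n e x)
  have hη n (hn : 1 ≤ n) : Measurable[𝓕 n] fun ω => 1 - y n ω / c :=
    measurable_const.sub ((hy_meas n hn).div_const c)
  have hηi n (hn : 1 ≤ n) : Integrable (fun ω => 1 - y n ω / c) μ :=
    (integrable_const 1).sub ((hy_int n hn).div_const c)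
  refine martingale_sum_Icc_mul_sum_Icc
    (G := fun n => 𝓕 n ⊔ MeasurableSpace.comap (a (n + 1)) inferInstance)
    (fun n => le_sup_left) (fun n => sup_le (𝓕.le n) (ha _ n.succ_pos).comap_le)
    (fun n hn => (hF_meas n).comp
      ((ha_meas n hn).prodMk ((hX _).mono (𝓕.mono (n.sub_le 1)) le_rfl)))
    (fun n => (hF_meas _).comp (((comap_measurable (a (n + 1))).mono le_sup_right le_rfl).prodMk
      ((hX n).mono le_sup_left le_rfl))) (fun n ω => hF_bdd n _ _) hη hηi
    (fun n => indep_of_indep_of_le_right (by simpa using (hy_indep (n + 1) n.succ_pos).symm)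
      (measurable_const.sub ((comap_measurable (y (n + 1))).div_const c)).comap_le)
    (fun n => integral_one_sub_div_eq_zero (hy_int _ n.succ_pos) hc (hy_mean _ n.succ_pos))
    (fun n s hs => ?_)
  simp only [Nat.add_sub_cancel]
  exact setIntegral_comp_mul_eq_zero_of_indep (F := fun e x => f (n + 1) e x - _)
    (𝓕.le n) hs (ha _ n.succ_pos) (hX n) (stronglyAdapted_sum_Icc 𝓕 hη n).measurable
    (integrable_finsetSum _ fun k hk => hηi k (mem_Icc.mp hk).1)
    (by simpa using ha_indep (n + 1) n.succ_pos) (hF_meas _) (hF_bdd _) (hF_centred _ n.succ_pos)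
end

section
/- Let M > 0, let R : [0,M] → [0,∞) be nondecreasing and right-continuous with R(0) = 0, and let μ_R be its Lebesgue–Stieltjes measure on [0,M]. Let g ≥ 0, let U : [0,M] → [0,∞) be bounded, and let X : [0,M] → ℝ be bounded and Borel measurable, satisfying |X(t)| ≤ U(t) + g · ∫_{[0,t)} |X(s)| dμ_R(s) for every t ∈ [0,M]. Then sup_{t∈[0,M]} |X(t)| ≤ C + C⁴, where C := max{ e^{g·μ_R([0,M])}, sup_{t∈[0,M]} U(t), g, μ_R([0,M]) }. (This is the pathwise Grönwall bound (equation (26)) established in the proof of the tightness lemma, Lemma 5.3.) -/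
/-!
Write `Φ(x) = A + g ∫_{[a,x]} φ dμ` for the majorant. Cut `[a,b]` into blocks `(x,y]` whose open
pieces `(x,t)` carry mass at most `ε`, where `g ε ≤ 1/2`. On such a block the inequality gives
`sup φ ≤ Φ(x) + g ε sup φ`, so `sup φ ≤ 2 Φ(x)` and
`Φ(y) ≤ Φ(x) (1 + 2 g μ(x,y]) ≤ Φ(x) e^{2 g μ(x,y]}`; an atom at the right end `y` only enters
`Φ(y)`, never the supremum. Taking `y` to be the first time the Stieltjes function has risen by
`ε`, every block but the last has mass at least `ε`, so finitely many blocks reach `b`, and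
chaining them gives `φ ≤ A e^{2 g μ[a,b]}`. With `A ≤ C` and `e^{g μ[0,M]} ≤ C` this is at most
`C³ ≤ C + C⁴`.
-/

open MeasureTheory Set Function Real

theorem StieltjesFunction.exists_block_measureReal_Ioo_le (f : StieltjesFunction ℝ) {ε x b : ℝ}
    (hε : 0 < ε) (hxb : x < b) :
    ∃ y ∈ Ioc x b, (∀ t ∈ Ioc x y, f.measure.real (Ioo x t) ≤ ε) ∧ (y < b → f x + ε ≤ f y) := by
  suffices ∃ y ∈ Ioc x b, (∀ t ∈ Ioc x y, leftLim f t ≤ f x + ε) ∧ (y < b → f x + ε ≤ f y) by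
    obtain ⟨y, hy, hleft, hjump⟩ := this
    refine ⟨y, hy, fun t ht => ?_, hjump⟩
    rw [measureReal_def, f.measure_Ioo, ENNReal.toReal_ofReal']
    exact max_le (by linarith [hleft t ht]) hε.le
  by_cases hb : f b < f x + ε
  · exact ⟨b, ⟨hxb, le_rfl⟩, fun t ht => (f.mono.leftLim_le ht.2).trans hb.le,
      fun h => absurd h (lt_irrefl b)⟩
  -- the first time in `[x, b]` at which `f` has risen by `ε`; right continuity makes it attained
  set T := {s ∈ Icc x b | f x + ε ≤ f s}
  have hbT : b ∈ T := ⟨⟨hxb.le, le_rfl⟩, not_lt.1 hb⟩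
  have hT : BddBelow T := ⟨x, fun s hs => hs.1.1⟩
  have hfy : f x + ε ≤ f (sInf T) := by
    rw [← f.iInf_Ioi_eq (sInf T)]
    refine le_ciInf fun r => ?_
    obtain ⟨s, hsT, hsr⟩ := exists_lt_of_csInf_lt ⟨b, hbT⟩ r.2
    exact hsT.2.trans (f.mono hsr.le)
  have hxy : x < sInf T :=
    (le_csInf ⟨b, hbT⟩ fun s hs => hs.1.1).lt_of_ne (by rintro h; rw [← h] at hfy; linarith)
  have hyb : sInf T ≤ b := csInf_le hT hbT
  refine ⟨sInf T, ⟨hxy, hyb⟩, fun t ht => ?_, fun _ => hfy⟩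
  refine le_of_tendsto (f.mono.tendsto_leftLim t) ?_
  filter_upwards [Ioo_mem_nhdsLT ht.1] with s hs
  by_contra! hfs
  have hsT : s ∈ T := ⟨⟨hs.1.le, (hs.2.trans_le (ht.2.trans hyb)).le⟩, hfs.le⟩
  exact (csInf_le hT hsT).not_gt (hs.2.trans_le ht.2)

theorem setIntegral_le_mul_measureReal {α : Type*} [MeasurableSpace α] {μ : Measure α}
    {φ : α → ℝ} {s : Set α} {T : ℝ} (hs : μ s < ⊤) (h0 : ∀ t ∈ s, 0 ≤ φ t)
    (hT : ∀ t ∈ s, φ t ≤ T) : ∫ t in s, φ t ∂μ ≤ T * μ.real s :=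
  (le_abs_self _).trans <| norm_setIntegral_le_of_norm_le_const hs fun t ht => by
    rw [Real.norm_eq_abs, abs_of_nonneg (h0 t ht)]; exact hT t ht

section Gronwall

variable {μ : Measure ℝ} [IsLocallyFiniteMeasure μ] {φ : ℝ → ℝ} {A g ε a b x y : ℝ}

theorem le_two_mul_majorant_of_measureReal_Ioo_le (hg : 0 ≤ g) (hgε : g * ε ≤ 1 / 2)
    (hφ0 : ∀ t ∈ Icc a b, 0 ≤ φ t) (hint : IntegrableOn φ (Icc a b) μ)
    (hbdd : BddAbove (φ '' Icc a b))
    (h : ∀ t ∈ Icc a b, φ t ≤ A + g * ∫ s in Ico a t, φ s ∂μ)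
    (hx : x ∈ Icc a b) (hyb : y ≤ b) (hsmall : ∀ t ∈ Ioc x y, μ.real (Ioo x t) ≤ ε) :
    ∀ t ∈ Ioc x y, φ t ≤ 2 * (A + g * ∫ s in Icc a x, φ s ∂μ) := by
  have hsub : ∀ {t}, t ≤ b → Ioc x t ⊆ Icc a b := fun htb s hs =>
    ⟨hx.1.trans hs.1.le, hs.2.trans htb⟩
  set T := sSup (φ '' Ioc x y)
  have hT : ∀ t ∈ Ioc x y, φ t ≤ T := fun t ht =>
    le_csSup (hbdd.mono (image_mono (hsub hyb))) (mem_image_of_mem φ ht)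
  have hstep : ∀ t ∈ Ioc x y, φ t ≤ A + g * ∫ s in Icc a x, φ s ∂μ + g * (ε * T) := by
    intro t ht
    have hIoo : Ioo x t ⊆ Icc a b := Ioo_subset_Ioc_self.trans (hsub (ht.2.trans hyb))
    have hsplit : ∫ s in Ico a t, φ s ∂μ = ∫ s in Icc a x, φ s ∂μ + ∫ s in Ioo x t, φ s ∂μ := by
      rw [← Icc_union_Ioo_eq_Ico hx.1 ht.1]
      exact setIntegral_union ((Iic_disjoint_Ioi le_rfl).mono Icc_subset_Iic_self
        Ioo_subset_Ioi_self) measurableSet_Ioo (hint.mono_set (Icc_subset_Icc_right hx.2))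
        (hint.mono_set hIoo)
    have hIooT : ∫ s in Ioo x t, φ s ∂μ ≤ ε * T := by
      refine (setIntegral_le_mul_measureReal measure_Ioo_lt_top (fun s hs => hφ0 s (hIoo hs))
        fun s hs => hT s ⟨hs.1, hs.2.le.trans ht.2⟩).trans ?_
      rw [mul_comm]
      exact mul_le_mul_of_nonneg_right (hsmall t ht) ((hφ0 t (hsub hyb ht)).trans (hT t ht))
    have hφt := h t (hsub hyb ht)
    rw [hsplit] at hφt
    nlinarith
  intro t ht
  have hT0 : 0 ≤ T := (hφ0 t (hsub hyb ht)).trans (hT t ht)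
  have hTle : T ≤ A + g * ∫ s in Icc a x, φ s ∂μ + g * (ε * T) :=
    csSup_le (nonempty_Ioc.2 (ht.1.trans_le ht.2) |>.image φ) (forall_mem_image.2 hstep)
  nlinarith [hT t ht]

theorem majorant_le_mul_exp_of_measureReal_Ioo_le (hg : 0 ≤ g) (hA : 0 ≤ A)
    (hgε : g * ε ≤ 1 / 2) (hφ0 : ∀ t ∈ Icc a b, 0 ≤ φ t) (hint : IntegrableOn φ (Icc a b) μ)
    (hbdd : BddAbove (φ '' Icc a b))
    (h : ∀ t ∈ Icc a b, φ t ≤ A + g * ∫ s in Ico a t, φ s ∂μ)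
    (hx : x ∈ Icc a b) (hxy : x ≤ y) (hyb : y ≤ b)
    (hsmall : ∀ t ∈ Ioc x y, μ.real (Ioo x t) ≤ ε) :
    A + g * ∫ s in Icc a y, φ s ∂μ ≤
      (A + g * ∫ s in Icc a x, φ s ∂μ) * exp (2 * g * μ.real (Ioc x y)) := by
  set Φ := A + g * ∫ s in Icc a x, φ s ∂μ
  have hIcc : Icc a x ⊆ Icc a b := Icc_subset_Icc_right hx.2
  have hIoc : Ioc x y ⊆ Icc a b := fun s hs => ⟨hx.1.trans hs.1.le, hs.2.trans hyb⟩
  have hΦ : 0 ≤ Φ :=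
    add_nonneg hA <| mul_nonneg hg <| setIntegral_nonneg measurableSet_Icc fun s hs =>
      hφ0 s (hIcc hs)
  have hsplit : ∫ s in Icc a y, φ s ∂μ = ∫ s in Icc a x, φ s ∂μ + ∫ s in Ioc x y, φ s ∂μ := by
    rw [← Icc_union_Ioc_eq_Icc hx.1 hxy]
    exact setIntegral_union ((Iic_disjoint_Ioi le_rfl).mono Icc_subset_Iic_self
      Ioc_subset_Ioi_self) measurableSet_Ioc (hint.mono_set hIcc) (hint.mono_set hIoc)
  have hblock : ∫ s in Ioc x y, φ s ∂μ ≤ 2 * Φ * μ.real (Ioc x y) :=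
    setIntegral_le_mul_measureReal measure_Ioc_lt_top (fun s hs => hφ0 s (hIoc hs))
      (le_two_mul_majorant_of_measureReal_Ioo_le hg hgε hφ0 hint hbdd h hx hyb hsmall)
  have hm : 0 ≤ μ.real (Ioc x y) := measureReal_nonneg
  calc A + g * ∫ s in Icc a y, φ s ∂μ ≤ Φ * (1 + 2 * g * μ.real (Ioc x y)) := by
        rw [hsplit]; nlinarith [mul_le_mul_of_nonneg_left hblock hg]
    _ ≤ Φ * exp (2 * g * μ.real (Ioc x y)) := by
        gcongr; linarith [add_one_le_exp (2 * g * μ.real (Ioc x y))]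

theorem StieltjesFunction.majorant_le_mul_exp (f : StieltjesFunction ℝ) (hg : 0 ≤ g) (hA : 0 ≤ A)
    (hφ0 : ∀ t ∈ Icc a b, 0 ≤ φ t) (hint : IntegrableOn φ (Icc a b) f.measure)
    (hbdd : BddAbove (φ '' Icc a b))
    (h : ∀ t ∈ Icc a b, φ t ≤ A + g * ∫ s in Ico a t, φ s ∂f.measure) (hx : x ∈ Icc a b) :
    A + g * ∫ s in Icc a b, φ s ∂f.measure ≤
      (A + g * ∫ s in Icc a x, φ s ∂f.measure) * exp (2 * g * (f b - f x)) := by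
  set ε := 1 / (2 * g + 1)
  have hε : 0 < ε := by positivity
  have hgε : g * ε ≤ 1 / 2 := by
    rw [mul_one_div, div_le_iff₀ (by positivity)]; linarith
  -- induction on the number of blocks of `f`-mass at least `ε` needed to reach `b`
  suffices H : ∀ n : ℕ, ∀ x ∈ Icc a b, f b - f x < n * ε →
      A + g * ∫ s in Icc a b, φ s ∂f.measure ≤
        (A + g * ∫ s in Icc a x, φ s ∂f.measure) * exp (2 * g * (f b - f x)) by
    obtain ⟨n, hn⟩ := exists_nat_gt ((f b - f x) / ε)
    exact H n x hx ((div_lt_iff₀ hε).1 hn)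
  intro n
  induction n with
  | zero =>
    intro x hx hlt
    simp only [CharP.cast_eq_zero, zero_mul, sub_neg] at hlt
    exact absurd (f.mono hx.2) hlt.not_ge
  | succ n ih =>
    intro x hx hlt
    rcases hx.2.eq_or_lt with rfl | hxb
    · simp
    obtain ⟨y, ⟨hxy, hyb⟩, hsmall, hjump⟩ := f.exists_block_measureReal_Ioo_le hε hxb
    have hblock := majorant_le_mul_exp_of_measureReal_Ioo_le hg hA hgε hφ0 hint hbdd h hx hxy.le
      hyb hsmall
    rw [measureReal_def, f.measure_Ioc, ENNReal.toReal_ofReal (sub_nonneg.2 (f.mono hxy.le))]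
      at hblock
    rcases hyb.eq_or_lt with rfl | hyb
    · exact hblock
    have hy : y ∈ Icc a b := ⟨hx.1.trans hxy.le, hyb.le⟩
    calc A + g * ∫ s in Icc a b, φ s ∂f.measure
        ≤ (A + g * ∫ s in Icc a y, φ s ∂f.measure) * exp (2 * g * (f b - f y)) :=
          ih y hy (by push_cast at hlt; linarith [hjump hyb])
      _ ≤ (A + g * ∫ s in Icc a x, φ s ∂f.measure) * exp (2 * g * (f y - f x)) *
            exp (2 * g * (f b - f y)) := by gcongr
      _ = (A + g * ∫ s in Icc a x, φ s ∂f.measure) * exp (2 * g * (f b - f x)) := by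
          rw [mul_assoc, ← exp_add]; ring_nf

theorem StieltjesFunction.le_mul_exp_of_le_add_mul_setIntegral (f : StieltjesFunction ℝ)
    (hg : 0 ≤ g) (hA : 0 ≤ A) (hφ0 : ∀ t ∈ Icc a b, 0 ≤ φ t)
    (hint : IntegrableOn φ (Icc a b) f.measure) (hbdd : BddAbove (φ '' Icc a b))
    (h : ∀ t ∈ Icc a b, φ t ≤ A + g * ∫ s in Ico a t, φ s ∂f.measure) :
    ∀ t ∈ Icc a b, φ t ≤ A * exp (2 * g * f.measure.real (Icc a b)) := by
  intro t ht
  have hab : a ≤ b := ht.1.trans ht.2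
  have ha : a ∈ Icc a b := ⟨le_rfl, hab⟩
  set m := f a - leftLim f a
  have hm : 0 ≤ m := sub_nonneg.2 (f.mono.leftLim_le le_rfl)
  have hφa : φ a ≤ A := by simpa using h a ha
  have hstart : A + g * ∫ s in Icc a a, φ s ∂f.measure ≤ A * exp (2 * g * m) := by
    rw [Icc_self, integral_singleton, measureReal_def, f.measure_singleton,
      ENNReal.toReal_ofReal hm, smul_eq_mul]
    nlinarith [add_one_le_exp (2 * g * m), mul_nonneg hg hm]
  have hend := f.majorant_le_mul_exp hg hA hφ0 hint hbdd h ha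
  have hmass : f.measure.real (Icc a b) = m + (f b - f a) := by
    rw [measureReal_def, f.measure_Icc, ENNReal.toReal_ofReal (by linarith [f.mono hab])]; ring
  calc φ t ≤ A + g * ∫ s in Ico a t, φ s ∂f.measure := h t ht
    _ ≤ A + g * ∫ s in Icc a b, φ s ∂f.measure := by
        gcongr A + g * ?_
        exact setIntegral_mono_set hint (ae_restrict_of_forall_mem measurableSet_Icc hφ0)
          (Ico_subset_Icc_self.trans (Icc_subset_Icc_right ht.2)).eventuallyLE
    _ ≤ A * exp (2 * g * m) * exp (2 * g * (f b - f a)) := hend.trans (by gcongr)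
    _ = A * exp (2 * g * f.measure.real (Icc a b)) := by
        rw [mul_assoc, ← exp_add, hmass]; ring_nf

end Gronwall

theorem pathwise_gronwall_bound_general
    (M : ℝ)
    (R : StieltjesFunction ℝ)
    (g : ℝ) (hg : 0 ≤ g)
    (U X : ℝ → ℝ)
    (hU_nonneg : ∀ t ∈ Set.Icc (0:ℝ) M, 0 ≤ U t)
    (hU_bdd : ∃ B, ∀ t ∈ Set.Icc (0:ℝ) M, U t ≤ B)
    (hX_meas : Measurable X)
    (hX_bdd : ∃ B, ∀ t ∈ Set.Icc (0:ℝ) M, |X t| ≤ B)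
    (hineq : ∀ t ∈ Set.Icc (0:ℝ) M,
      |X t| ≤ U t + g * ∫ s in Set.Ico (0:ℝ) t, |X s| ∂(R.measure))
    (C : ℝ)
    (hC : C = max
      (max (Real.exp (g * (R.measure (Set.Icc (0:ℝ) M)).toReal))
        (sSup (U '' Set.Icc (0:ℝ) M)))
      (max g ((R.measure (Set.Icc (0:ℝ) M)).toReal))) :
    ∀ t ∈ Set.Icc (0:ℝ) M, |X t| ≤ C + C ^ 4 := by
  intro t ht
  set A := sSup (U '' Icc 0 M)
  have hUA : ∀ s ∈ Icc 0 M, U s ≤ A := fun s hs =>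
    le_csSup (hU_bdd.imp fun _ hB => forall_mem_image.2 hB) (mem_image_of_mem U hs)
  obtain ⟨B, hB⟩ := hX_bdd
  have hint : IntegrableOn (fun s => |X s|) (Icc 0 M) R.measure :=
    Measure.integrableOn_of_bounded measure_Icc_lt_top.ne hX_meas.abs.aestronglyMeasurable
      (ae_restrict_of_forall_mem measurableSet_Icc fun s hs => by simpa using hB s hs)
  have hXA := R.le_mul_exp_of_le_add_mul_setIntegral hg ((hU_nonneg t ht).trans (hUA t ht))
    (fun s _ => abs_nonneg (X s)) hint ⟨B, forall_mem_image.2 hB⟩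
    (fun s hs => (hineq s hs).trans (by gcongr; exact hUA s hs)) t ht
  set E := exp (g * (R.measure (Icc 0 M)).toReal)
  have hEC : E ≤ C := hC ▸ le_max_of_le_left (le_max_left _ _)
  have hAC : A ≤ C := hC ▸ le_max_of_le_left (le_max_right _ _)
  have hC1 : 1 ≤ C := (one_le_exp (by positivity)).trans hEC
  calc |X t| ≤ A * E ^ 2 := by rwa [← exp_nat_mul, Nat.cast_ofNat, ← mul_assoc]
    _ ≤ C * C ^ 2 := by gcongr
    _ = C ^ 3 := by ring
    _ ≤ C ^ 4 := pow_le_pow_right₀ hC1 (by norm_num)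
    _ ≤ C + C ^ 4 := le_add_of_nonneg_left (by linarith)

/-- The pathwise Grönwall bound (equation (26)) from the proof of the
tightness lemma (Lemma 5.3): if `|X(t)| ≤ U(t) + g ∫_{[0,t)} |X| dμ_R` on `[0,M]`, then
`sup_{[0,M]} |X| ≤ C + C⁴` with
`C = max{ e^{g μ_R([0,M])}, sup_{[0,M]} U, g, μ_R([0,M]) }`. -/
theorem pathwise_gronwall_bound
    (M : ℝ) (hM : 0 < M)
    (R : StieltjesFunction ℝ) (hR0 : R 0 = 0)
    (g : ℝ) (hg : 0 ≤ g)
    (U X : ℝ → ℝ)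
    (hU_nonneg : ∀ t ∈ Set.Icc (0:ℝ) M, 0 ≤ U t)
    (hU_bdd : ∃ B, ∀ t ∈ Set.Icc (0:ℝ) M, U t ≤ B)
    (hX_meas : Measurable X)
    (hX_bdd : ∃ B, ∀ t ∈ Set.Icc (0:ℝ) M, |X t| ≤ B)
    (hineq : ∀ t ∈ Set.Icc (0:ℝ) M,
      |X t| ≤ U t + g * ∫ s in Set.Ico (0:ℝ) t, |X s| ∂(R.measure))
    (C : ℝ)
    (hC : C = max
      (max (Real.exp (g * (R.measure (Set.Icc (0:ℝ) M)).toReal))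
        (sSup (U '' Set.Icc (0:ℝ) M)))
      (max g ((R.measure (Set.Icc (0:ℝ) M)).toReal))) :
    ∀ t ∈ Set.Icc (0:ℝ) M, |X t| ≤ C + C ^ 4 :=
  pathwise_gronwall_bound_general M R g hg U X hU_nonneg hU_bdd hX_meas hX_bdd hineq C hC
end

section
/- Let M > 0, let R : [0,M] → [0,∞) be nondecreasing and right-continuous with R(0) = 0 and Lebesgue–Stieltjes measure μ_R, let f : [0,M] → ℝ be bounded Borel with F := sup_{s∈[0,M]} |f(s)|, let U : [0,M] → ℝ be bounded Borel, and let X : [0,M] → ℝ be bounded Borel satisfying X(t) = ∫_{[0,t)} f(s) X(s) dμ_R(s) + U(t) for every t ∈ [0,M]. Then for every θ ∈ (0, M]: sup_{t∈[0,M−θ]} sup_{δ∈[0,θ)} |X(t+δ) − X(t)| ≤ F·(C + C⁴)·sup_{t∈[0,M−θ]} μ_R([t, t+θ)) + sup_{t∈[0,M−θ]} sup_{δ∈[0,θ)} |U(t+δ) − U(t)|, where C := max{ e^{F·μ_R([0,M])}, sup_{t∈[0,M]} |U(t)|, F, μ_R([0,M]) }. (This is the pathwise oscillation bound established in the proof of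 the tightness lemma, Lemma 5.3.) -/
/-!
Iterating the Volterra equation `X(t) = ∫_{[0,t)} f X dμ + U(t)` gives the Gronwall bound
`|X(t)| ≤ sup |U| · exp (F μ[0,t))`. Each iteration needs
`∫_{[0,t)} μ[0,s)^n dμ(s) ≤ μ[0,t)^(n+1) / (n+1)`, which survives atoms of `μ` because the
interval `[0,s)` is open at `s`: under `μ^(n+1)` the events "coordinate `j` is the strict
maximum" are disjoint, and each has mass `∫ μ(Iio s)^n dμ(s)`.
Then `X(t+δ) - X(t) = ∫_{[t,t+δ)} f X dμ + U(t+δ) - U(t)` with `|f X| ≤ F C²` and `C² ≤ C + C⁴`.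
-/

open MeasureTheory Set ENNReal

section StrictMax

variable {α : Type*} [LinearOrder α]

def strictMaxAt {ι : Type*} (j : ι) : Set (ι → α) := {x | ∀ i ≠ j, x i < x j}

theorem pairwise_disjoint_strictMaxAt {ι : Type*} :
    Pairwise (Function.onFun Disjoint (strictMaxAt (α := α) (ι := ι))) := fun j k hjk =>
  disjoint_left.2 fun _ hj hk => lt_asymm (hj k hjk.symm) (hk j hjk)

variable [TopologicalSpace α] [OrderClosedTopology α] [SecondCountableTopology α]
  [MeasurableSpace α] [OpensMeasurableSpace α]

theorem measurableSet_strictMaxAt {ι : Type*} [Countable ι] (j : ι) :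
    MeasurableSet (strictMaxAt (α := α) j) := by
  simp only [strictMaxAt, ofPred_forall]
  exact .iInter fun i => .iInter fun _ =>
    measurableSet_lt (measurable_pi_apply i) (measurable_pi_apply j)

variable (m : Measure α) [SigmaFinite m]

theorem pi_strictMaxAt {n : ℕ} (j : Fin (n + 1)) :
    Measure.pi (fun _ => m) (strictMaxAt j) = ∫⁻ s, m (Iio s) ^ n ∂m := by
  set S : Set (α × (Fin n → α)) := {p | ∀ i, p.2 i < p.1}
  have hS : MeasurableSet S := by
    simp only [S, ofPred_forall]
    exact .iInter fun i => measurableSet_lt (measurable_snd.eval) measurable_fst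
  have hpre : MeasurableEquiv.piFinSuccAbove (fun _ => α) j ⁻¹' S = strictMaxAt j := by
    ext x
    simp [S, strictMaxAt, MeasurableEquiv.piFinSuccAbove_apply, Fin.removeNth_apply,
      Fin.forall_iff_succAbove j]
  rw [← hpre, (measurePreserving_piFinSuccAbove (fun _ => m) j).measure_preimage
    hS.nullMeasurableSet, Measure.prod_apply hS]
  congr 1 with s
  have : Prod.mk s ⁻¹' S = univ.pi fun _ => Iio s := by ext; simp [S]
  simp [this, Measure.pi_pi]

theorem natCast_add_one_mul_lintegral_measure_Iio_pow_le (n : ℕ) :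
    (n + 1 : ℝ≥0∞) * ∫⁻ s, m (Iio s) ^ n ∂m ≤ m univ ^ (n + 1) := by
  let P := Measure.pi fun _ : Fin (n + 1) => m
  calc (n + 1 : ℝ≥0∞) * ∫⁻ s, m (Iio s) ^ n ∂m
      = ∑ j, P (strictMaxAt j) := by simp [P, pi_strictMaxAt]
    _ = P (⋃ j, strictMaxAt j) := by
        rw [measure_iUnion pairwise_disjoint_strictMaxAt measurableSet_strictMaxAt, tsum_fintype]
    _ ≤ P univ := measure_mono (subset_univ _)
    _ = m univ ^ (n + 1) := by simp [P, Measure.pi_univ]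

end StrictMax

section Gronwall

open Nat

variable {ν : Measure ℝ} [IsLocallyFiniteMeasure ν] {a : ℝ}

theorem monotone_measureReal_Ico : Monotone fun s => ν.real (Ico a s) := fun _ _ hst =>
  measureReal_mono (Ico_subset_Ico_right hst) measure_Ico_lt_top.ne

theorem Monotone.integrableOn_Ico {g : ℝ → ℝ} (hg : Monotone g) (t : ℝ) :
    IntegrableOn g (Ico a t) ν :=
  (hg.locallyIntegrable.integrableOn_isCompact isCompact_Icc).mono_set Ico_subset_Icc_self

theorem setIntegral_measureReal_Ico_pow_le (t : ℝ) (n : ℕ) :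
    ∫ s in Ico a t, ν.real (Ico a s) ^ n ∂ν ≤ ν.real (Ico a t) ^ (n + 1) / (n + 1) := by
  set m := ν.restrict (Ico a t)
  have : IsFiniteMeasure m := isFiniteMeasure_restrict.2 measure_Ico_lt_top.ne
  have hm : ∀ s ∈ Ico a t, ν.real (Ico a s) ^ n = (m (Iio s) ^ n).toReal := fun s hs => by
    rw [toReal_pow, Measure.restrict_apply measurableSet_Iio, inter_comm, Ico_inter_Iio,
      min_eq_right hs.2.le, measureReal_def]
  have hint : ∫ s in Ico a t, ν.real (Ico a s) ^ n ∂ν = (∫⁻ s, m (Iio s) ^ n ∂m).toReal := by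
    rw [setIntegral_congr_fun measurableSet_Ico hm]
    refine integral_toReal ((Monotone.measurable fun _ _ h => ?_).pow_const n).aemeasurable
      (.of_forall fun _ => by finiteness)
    exact measure_mono (Iio_subset_Iio h)
  have key := natCast_add_one_mul_lintegral_measure_Iio_pow_le m n
  rw [Measure.restrict_apply_univ] at key
  rw [hint, le_div_iff₀ (by positivity), mul_comm, measureReal_def]
  have := toReal_mono (pow_ne_top measure_Ico_lt_top.ne) key
  rwa [toReal_mul, toReal_pow, ← Nat.cast_add_one, toReal_natCast, Nat.cast_add_one] at this

theorem mul_setIntegral_pow_div_factorial_le {F : ℝ} (hF : 0 ≤ F) (t : ℝ) (k : ℕ) :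
    F * ∫ s in Ico a t, (F * ν.real (Ico a s)) ^ k / k ! ∂ν
      ≤ (F * ν.real (Ico a t)) ^ (k + 1) / (k + 1)! := by
  calc F * ∫ s in Ico a t, (F * ν.real (Ico a s)) ^ k / k ! ∂ν
      = F ^ (k + 1) / k ! * ∫ s in Ico a t, ν.real (Ico a s) ^ k ∂ν := by
        simp_rw [mul_pow, mul_div_right_comm, integral_const_mul]
        ring
    _ ≤ F ^ (k + 1) / k ! * (ν.real (Ico a t) ^ (k + 1) / (k + 1)) := by
        gcongr
        exact setIntegral_measureReal_Ico_pow_le t k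
    _ = (F * ν.real (Ico a t)) ^ (k + 1) / (k + 1)! := by
        rw [factorial_succ]
        push_cast
        field_simp
        ring

theorem le_partial_exp_of_le_add_mul_setIntegral {h : ℝ → ℝ} {b D F B : ℝ} (hD : 0 ≤ D)
    (hF : 0 ≤ F) (hB : 0 ≤ B) (h_int : IntegrableOn h (Ico a b) ν)
    (h_le_B : ∀ t ∈ Icc a b, h t ≤ B)
    (h_le : ∀ t ∈ Icc a b, h t ≤ D + F * ∫ s in Ico a t, h s ∂ν) (n : ℕ) :
    ∀ t ∈ Icc a b, h t ≤ D * ∑ k ∈ Finset.range n, (F * ν.real (Ico a t)) ^ k / k !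
      + B * ((F * ν.real (Ico a t)) ^ n / n !) := by
  induction n with
  | zero => simpa using h_le_B
  | succ n ih =>
    intro t ht
    set e : ℕ → ℝ → ℝ := fun k s => (F * ν.real (Ico a s)) ^ k / (k !)
    have he_int : ∀ k, IntegrableOn (e k) (Ico a t) ν := fun k =>
      Monotone.integrableOn_Ico (fun s s' hss' => by
        have := monotone_measureReal_Ico (ν := ν) (a := a) hss'
        dsimp only [e]
        gcongr) t
    have hIcoIcc : Ico a t ⊆ Icc a b := fun s hs => ⟨hs.1, hs.2.le.trans ht.2⟩
    calc h t ≤ D + F * ∫ s in Ico a t, h s ∂ν := h_le t ht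
      _ ≤ D + F * ∫ s in Ico a t, D * ∑ k ∈ Finset.range n, e k s + B * e n s ∂ν := by
          gcongr D + F * ?_
          exact setIntegral_mono_on (h_int.mono_set (Ico_subset_Ico_right ht.2))
            (((integrable_finsetSum _ fun k _ => he_int k).const_mul D).add
              ((he_int n).const_mul B)) measurableSet_Ico fun s hs => ih s (hIcoIcc hs)
      _ = D + (D * ∑ k ∈ Finset.range n, F * ∫ s in Ico a t, e k s ∂ν
            + B * (F * ∫ s in Ico a t, e n s ∂ν)) := by
          rw [integral_add ((integrable_finsetSum _ fun k _ => he_int k).const_mul D)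
            ((he_int n).const_mul B), integral_const_mul, integral_const_mul,
            integral_finsetSum _ fun k _ => he_int k, ← Finset.mul_sum]
          ring
      _ ≤ D + (D * ∑ k ∈ Finset.range n, e (k + 1) t + B * e (n + 1) t) := by
          gcongr with k
          · exact mul_setIntegral_pow_div_factorial_le hF t k
          · exact mul_setIntegral_pow_div_factorial_le hF t n
      _ = D * ∑ k ∈ Finset.range (n + 1), e k t + B * e (n + 1) t := by
          rw [Finset.sum_range_succ' (e · t)]
          simp [e]
          ring

theorem le_mul_exp_of_le_add_mul_setIntegral {h : ℝ → ℝ} {b D F : ℝ} (hD : 0 ≤ D) (hF : 0 ≤ F)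
    (h_int : IntegrableOn h (Ico a b) ν) (h_bdd : ∃ B, ∀ t ∈ Icc a b, h t ≤ B)
    (h_le : ∀ t ∈ Icc a b, h t ≤ D + F * ∫ s in Ico a t, h s ∂ν) :
    ∀ t ∈ Icc a b, h t ≤ D * Real.exp (F * ν.real (Ico a t)) := by
  obtain ⟨B, hB⟩ := h_bdd
  intro t ht
  set x := F * ν.real (Ico a t)
  have hx : 0 ≤ x := by positivity
  have hlim := ((FloorSemiring.tendsto_pow_div_factorial_atTop x).const_mul (max B 0)).const_add
    (D * Real.exp x)
  rw [mul_zero, add_zero] at hlim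
  refine ge_of_tendsto' hlim fun n => ?_
  calc h t ≤ D * ∑ k ∈ Finset.range n, x ^ k / k ! + max B 0 * (x ^ n / n !) :=
        le_partial_exp_of_le_add_mul_setIntegral hD hF (le_max_right B 0) h_int
          (fun t ht => (hB t ht).trans (le_max_left B 0)) h_le n t ht
    _ ≤ D * Real.exp x + max B 0 * (x ^ n / n !) := by
        gcongr
        exact Real.sum_le_exp_of_nonneg hx n

end Gronwall

theorem le_csSup_image_of_forall_le {α : Type*} {g : α → ℝ} {s : Set α}
    (hg : ∃ B, ∀ x ∈ s, g x ≤ B) {x : α} (hx : x ∈ s) : g x ≤ sSup (g '' s) :=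
  le_csSup (hg.imp fun _ hB => forall_mem_image.2 hB) (mem_image_of_mem g hx)

section Volterra

variable {ν : Measure ℝ} [IsLocallyFiniteMeasure ν] {a b : ℝ} {f U X : ℝ → ℝ}

theorem Measurable.integrableOn_Icc_of_abs_le {g : ℝ → ℝ} {C : ℝ} (hg : Measurable g)
    (hC : ∀ x ∈ Icc a b, |g x| ≤ C) : IntegrableOn g (Icc a b) ν :=
  Measure.integrableOn_of_bounded measure_Icc_lt_top.ne hg.aestronglyMeasurable
    (ae_restrict_of_forall_mem measurableSet_Icc hC)

theorem integrableOn_mul_of_abs_le {F B : ℝ} (hf : Measurable f) (hX : Measurable X)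
    (hfF : ∀ s ∈ Icc a b, |f s| ≤ F) (hXB : ∀ s ∈ Icc a b, |X s| ≤ B) :
    IntegrableOn (fun s => f s * X s) (Icc a b) ν :=
  Measurable.integrableOn_Icc_of_abs_le (g := fun s => f s * X s) (hf.mul hX) fun s hs => by
    rw [abs_mul]
    exact mul_le_mul (hfF s hs) (hXB s hs) (abs_nonneg _) ((abs_nonneg _).trans (hfF s hs))

theorem abs_le_mul_exp_of_eq_setIntegral_add {F D : ℝ} (hf : Measurable f) (hX : Measurable X)
    (hfF : ∀ s ∈ Icc a b, |f s| ≤ F)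
    (heq : ∀ t ∈ Icc a b, X t = ∫ s in Ico a t, f s * X s ∂ν + U t)
    (hUD : ∀ t ∈ Icc a b, |U t| ≤ D)
    (hX_bdd : ∃ B, ∀ t ∈ Icc a b, |X t| ≤ B) :
    ∀ t ∈ Icc a b, |X t| ≤ D * Real.exp (F * ν.real (Ico a t)) := by
  intro t ht
  have ha : a ∈ Icc a b := ⟨le_rfl, ht.1.trans ht.2⟩
  obtain ⟨B, hB⟩ := hX_bdd
  have hX_int : IntegrableOn (fun s => |X s|) (Icc a b) ν :=
    hX.abs.integrableOn_Icc_of_abs_le (C := B) fun s hs => by simpa using hB s hs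
  have hfX_int : IntegrableOn (fun s => |f s * X s|) (Icc a b) ν :=
    (integrableOn_mul_of_abs_le hf hX hfF hB).abs
  refine le_mul_exp_of_le_add_mul_setIntegral ((abs_nonneg _).trans (hUD a ha))
    ((abs_nonneg _).trans (hfF a ha)) (hX_int.mono_set Ico_subset_Icc_self) ⟨B, hB⟩
    (fun t ht => ?_) t ht
  have hIco : Ico a t ⊆ Icc a b := fun s hs => ⟨hs.1, hs.2.le.trans ht.2⟩
  calc |X t| = |∫ s in Ico a t, f s * X s ∂ν + U t| := by rw [← heq t ht]
    _ ≤ ∫ s in Ico a t, |f s * X s| ∂ν + D :=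
        (abs_add_le _ _).trans (add_le_add abs_integral_le_integral_abs (hUD t ht))
    _ ≤ ∫ s in Ico a t, F * |X s| ∂ν + D := by
        gcongr ?_ + D
        refine setIntegral_mono_on (hfX_int.mono_set hIco) ((hX_int.mono_set hIco).const_mul F)
          measurableSet_Ico fun s hs => ?_
        rw [abs_mul]
        exact mul_le_mul_of_nonneg_right (hfF s (hIco hs)) (abs_nonneg _)
    _ = D + F * ∫ s in Ico a t, |X s| ∂ν := by
        rw [integral_const_mul]
        ring

theorem abs_sub_le_of_eq_setIntegral_add {F K : ℝ} (hf : Measurable f) (hX : Measurable X)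
    (hfF : ∀ s ∈ Icc a b, |f s| ≤ F)
    (heq : ∀ t ∈ Icc a b, X t = ∫ s in Ico a t, f s * X s ∂ν + U t)
    (hXK : ∀ t ∈ Icc a b, |X t| ≤ K) {t t' : ℝ} (ht : a ≤ t) (htt' : t ≤ t') (ht' : t' ≤ b) :
    |X t' - X t| ≤ F * K * ν.real (Ico t t') + |U t' - U t| := by
  have hfX_int := integrableOn_mul_of_abs_le (ν := ν) hf hX hfF hXK
  have hsplit : X t' - X t = ∫ s in Ico t t', f s * X s ∂ν + (U t' - U t) := by
    rw [heq t' ⟨ht.trans htt', ht'⟩, heq t ⟨ht, htt'.trans ht'⟩, ← Ico_union_Ico_eq_Ico ht htt',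
      setIntegral_union Ico_disjoint_Ico_same measurableSet_Ico
        (hfX_int.mono_set (Ico_subset_Icc_self.trans (Icc_subset_Icc_right (htt'.trans ht'))))
        (hfX_int.mono_set (Ico_subset_Icc_self.trans (Icc_subset_Icc ht ht')))]
    ring
  have hfX_le : ∀ s ∈ Ico t t', ‖f s * X s‖ ≤ F * K := fun s hs => by
    have hs' : s ∈ Icc a b := ⟨ht.trans hs.1, hs.2.le.trans ht'⟩
    rw [Real.norm_eq_abs, abs_mul]
    exact mul_le_mul (hfF s hs') (hXK s hs') (abs_nonneg _) ((abs_nonneg _).trans (hfF s hs'))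
  rw [hsplit]
  refine (abs_add_le _ _).trans (add_le_add ?_ le_rfl)
  simpa [Real.norm_eq_abs] using norm_setIntegral_le_of_norm_le_const measure_Ico_lt_top hfX_le

theorem measureReal_Ico_le_csSup {θ δ t : ℝ} (ht : t ∈ Icc a (b - θ)) (hδ : δ ≤ θ) :
    ν.real (Ico t (t + δ)) ≤ sSup ((fun r => ν.real (Ico r (r + θ))) '' Icc a (b - θ)) := by
  calc ν.real (Ico t (t + δ)) ≤ ν.real (Ico t (t + θ)) :=
        measureReal_mono (Ico_subset_Ico_right (by linarith)) measure_Ico_lt_top.ne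
    _ ≤ _ := by
        refine le_csSup_image_of_forall_le (g := fun r => ν.real (Ico r (r + θ)))
          ⟨ν.real (Icc a b), fun r hr => ?_⟩ ht
        refine measureReal_mono (fun x hx => ?_) measure_Icc_lt_top.ne
        exact ⟨hr.1.trans hx.1, by linarith [hr.2, hx.2]⟩

end Volterra

theorem abs_sub_le_csSup_oscillation {U : ℝ → ℝ} {a b θ t δ : ℝ}
    (hU : ∃ B, ∀ t ∈ Icc a b, |U t| ≤ B) (ht : t ∈ Icc a (b - θ)) (hδ : δ ∈ Ico 0 θ) :
    |U (t + δ) - U t|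
      ≤ sSup ((fun p : ℝ × ℝ => |U (p.1 + p.2) - U p.1|) '' (Icc a (b - θ) ×ˢ Ico 0 θ)) := by
  obtain ⟨B, hB⟩ := hU
  refine le_csSup_image_of_forall_le (g := fun p : ℝ × ℝ => |U (p.1 + p.2) - U p.1|)
    ⟨B + B, fun p hp => ?_⟩ (x := (t, δ)) ⟨ht, hδ⟩
  obtain ⟨⟨hp1, hp1'⟩, hp2, hp2'⟩ := hp
  exact (abs_sub _ _).trans (add_le_add (hB (p.1 + p.2) ⟨by linarith, by linarith⟩)
    (hB p.1 ⟨hp1, by linarith⟩))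

theorem pathwise_oscillation_bound_general
    (M : ℝ)
    (R : StieltjesFunction ℝ)
    (f U X : ℝ → ℝ)
    (hf_meas : Measurable f)
    (hf_bdd : ∃ B, ∀ s ∈ Set.Icc (0:ℝ) M, |f s| ≤ B)
    (hU_bdd : ∃ B, ∀ t ∈ Set.Icc (0:ℝ) M, |U t| ≤ B)
    (hX_meas : Measurable X)
    (hX_bdd : ∃ B, ∀ t ∈ Set.Icc (0:ℝ) M, |X t| ≤ B)
    (heq : ∀ t ∈ Set.Icc (0:ℝ) M,
      X t = (∫ s in Set.Ico (0:ℝ) t, f s * X s ∂(R.measure)) + U t)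
    (F : ℝ) (hF : F = sSup ((fun s => |f s|) '' Set.Icc (0:ℝ) M))
    (C : ℝ)
    (hC : C = max
      (max (Real.exp (F * (R.measure (Set.Icc (0:ℝ) M)).toReal))
        (sSup ((fun t => |U t|) '' Set.Icc (0:ℝ) M)))
      (max F ((R.measure (Set.Icc (0:ℝ) M)).toReal)))
    (supμ : ℝ → ℝ)
    (hsupμ : ∀ θ, supμ θ =
      sSup ((fun t => (R.measure (Set.Ico t (t + θ))).toReal) '' Set.Icc (0:ℝ) (M - θ)))
    (oscU : ℝ → ℝ)
    (hoscU : ∀ θ, oscU θ =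
      sSup ((fun p : ℝ × ℝ => |U (p.1 + p.2) - U p.1|) ''
        (Set.Icc (0:ℝ) (M - θ) ×ˢ Set.Ico (0:ℝ) θ))) :
    ∀ θ ∈ Set.Ioc (0:ℝ) M, ∀ t ∈ Set.Icc (0:ℝ) (M - θ), ∀ δ ∈ Set.Ico (0:ℝ) θ,
      |X (t + δ) - X t| ≤ F * (C + C ^ 4) * supμ θ + oscU θ := by
  rintro θ ⟨hθ0, hθM⟩ t ht δ hδ
  set ν := R.measure
  simp only [← measureReal_def] at hC hsupμ
  have h0 : (0 : ℝ) ∈ Icc 0 M := ⟨le_rfl, by linarith⟩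
  have hfF : ∀ s ∈ Icc 0 M, |f s| ≤ F := fun s hs => hF ▸ le_csSup_image_of_forall_le hf_bdd hs
  have hF0 : 0 ≤ F := (abs_nonneg _).trans (hfF 0 h0)
  have hUD : ∀ s ∈ Icc 0 M, |U s| ≤ sSup ((fun t => |U t|) '' Icc 0 M) := fun s hs =>
    le_csSup_image_of_forall_le hU_bdd hs
  have hC1 : 1 ≤ C := hC ▸ le_max_of_le_left (le_max_of_le_left (Real.one_le_exp (by positivity)))
  have hXC : ∀ s ∈ Icc 0 M, |X s| ≤ C * C := fun s hs => by
    refine (abs_le_mul_exp_of_eq_setIntegral_add hf_meas hX_meas hfF heq hUD hX_bdd s hs).trans ?_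
    refine mul_le_mul (hC ▸ le_max_of_le_left (le_max_right _ _)) ?_ (by positivity) (by linarith)
    refine hC ▸ le_max_of_le_left (le_max_of_le_left ?_)
    gcongr
    · exact measure_Icc_lt_top.ne
    · exact Ico_subset_Icc_self.trans (Icc_subset_Icc_right hs.2)
  calc |X (t + δ) - X t| ≤ F * (C * C) * ν.real (Ico t (t + δ)) + |U (t + δ) - U t| :=
        abs_sub_le_of_eq_setIntegral_add hf_meas hX_meas hfF heq hXC ht.1
          (le_add_of_nonneg_right hδ.1) (by linarith [ht.2, hδ.2])
    _ ≤ F * (C + C ^ 4) * supμ θ + oscU θ := by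
        rw [hsupμ θ, hoscU θ]
        gcongr
        · nlinarith [one_le_mul_of_one_le_of_one_le hC1 hC1]
        · exact measureReal_Ico_le_csSup ht hδ.2.le
        · exact abs_sub_le_csSup_oscillation hU_bdd ht hδ

/-- The pathwise oscillation bound from the proof of the tightness lemma
(Lemma 5.3): if `X(t) = ∫_{[0,t)} f X dμ_R + U(t)` on `[0,M]`, then for every `θ ∈ (0,M]`,
`sup_{t ∈ [0,M−θ]} sup_{δ ∈ [0,θ)} |X(t+δ) − X(t)|
  ≤ F (C + C⁴) sup_{t ∈ [0,M−θ]} μ_R([t,t+θ)) + sup_{t,δ} |U(t+δ) − U(t)|`,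
where `F = sup_{[0,M]} |f|` and
`C = max{ e^{F μ_R([0,M])}, sup_{[0,M]} |U|, F, μ_R([0,M]) }`. -/
theorem pathwise_oscillation_bound
    (M : ℝ) (hM : 0 < M)
    (R : StieltjesFunction ℝ) (hR0 : R 0 = 0)
    (f U X : ℝ → ℝ)
    (hf_meas : Measurable f)
    (hf_bdd : ∃ B, ∀ s ∈ Set.Icc (0:ℝ) M, |f s| ≤ B)
    (hU_meas : Measurable U)
    (hU_bdd : ∃ B, ∀ t ∈ Set.Icc (0:ℝ) M, |U t| ≤ B)
    (hX_meas : Measurable X)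
    (hX_bdd : ∃ B, ∀ t ∈ Set.Icc (0:ℝ) M, |X t| ≤ B)
    (heq : ∀ t ∈ Set.Icc (0:ℝ) M,
      X t = (∫ s in Set.Ico (0:ℝ) t, f s * X s ∂(R.measure)) + U t)
    (F : ℝ) (hF : F = sSup ((fun s => |f s|) '' Set.Icc (0:ℝ) M))
    (C : ℝ)
    (hC : C = max
      (max (Real.exp (F * (R.measure (Set.Icc (0:ℝ) M)).toReal))
        (sSup ((fun t => |U t|) '' Set.Icc (0:ℝ) M)))
      (max F ((R.measure (Set.Icc (0:ℝ) M)).toReal)))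
    (supμ : ℝ → ℝ)
    (hsupμ : ∀ θ, supμ θ =
      sSup ((fun t => (R.measure (Set.Ico t (t + θ))).toReal) '' Set.Icc (0:ℝ) (M - θ)))
    (oscU : ℝ → ℝ)
    (hoscU : ∀ θ, oscU θ =
      sSup ((fun p : ℝ × ℝ => |U (p.1 + p.2) - U p.1|) ''
        (Set.Icc (0:ℝ) (M - θ) ×ˢ Set.Ico (0:ℝ) θ))) :
    ∀ θ ∈ Set.Ioc (0:ℝ) M, ∀ t ∈ Set.Icc (0:ℝ) (M - θ), ∀ δ ∈ Set.Ico (0:ℝ) θ,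
      |X (t + δ) - X t| ≤ F * (C + C ^ 4) * supμ θ + oscU θ :=
  pathwise_oscillation_bound_general M R f U X hf_meas hf_bdd hU_bdd hX_meas hX_bdd heq F hF C hC
    supμ hsupμ oscU hoscU
end
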